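/- Let (C_k)_{k≥0} be a sequence of Laurent polynomials with integer coefficients such that there exist positive constants A, B, D with ℓ¹-norm ‖C_k‖₁ ≤ e^{A k + B log k} and support of C_k contained in [−D k², D k²] for all k ≥ 1. For k ≥ 0 and α, ε ∈ ℂ define g_k(α, ε) = (∏_{j=1}^{k} ((e^{α/2} − e^{−α/2})² − (e^{jε/2} − e^{−jε/2})²)) · C_k(e^{ε}). Then there exists an open neighborhood U of 0 in ℂ such that for every integer N ≥ 1 there exists a constant M'_N > 0 with the following property: for all integers n ≥ 1 and all α ∈ U, the series ∑_{k=0}^{∞} ∑_{j=0}^{N−1} (1/j!) · (∂^j g_k/∂ε^j)(α, 0) · (α/n)^j converges absolutely and its tail satisfies |∑_{k=n+1}^{∞} ∑_{j=0}^{N−1} (1/j!) · (∂^j g_k/∂ε^j)(α, 0) · (α/n)^j| ≤ M'_N. -/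

import Mathlib

/-- The evaluation of an integer Laurent polynomial (a finitely supported function `ℤ → ℤ`)
at a complex number `q`: `∑_j a_j q^j`. -/
noncomputable def laurentEval (c : ℤ →₀ ℤ) (q : ℂ) : ℂ :=
  ∑ j ∈ c.support, (c j : ℂ) * q ^ j

/-- The ℓ¹-norm of an integer Laurent polynomial: `∑_j |a_j|`. -/
noncomputable def laurentL1 (c : ℤ →₀ ℤ) : ℝ :=
  ∑ j ∈ c.support, |(c j : ℝ)|

/-- `g_k(α, ε) = (∏_{j=1}^{k} ((e^{α/2} − e^{−α/2})² − (e^{jε/2} − e^{−jε/2})²)) · C_k(e^ε)`. -/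
noncomputable def gAux (C : ℕ → (ℤ →₀ ℤ)) (k : ℕ) (α ε : ℂ) : ℂ :=
  (∏ j ∈ Finset.Icc 1 k,
    ((Complex.exp (α / 2) - Complex.exp (-α / 2)) ^ 2
      - (Complex.exp ((j : ℂ) * ε / 2) - Complex.exp (-((j : ℂ) * ε / 2))) ^ 2)) *
    laurentEval (C k) (Complex.exp ε)

/-!
For `k ≥ 1` and `‖α‖ ≤ ρ`, on the circle `‖ε‖ = ρ / k` every factor of the product defining
`g_k(α, ·)` is at most `8 ρ²`, while `‖C_k(e^ε)‖ ≤ e^{A k + B log k + D k}`. Choosing `ρ` with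
`8 ρ² ≤ e^{-(A + B + D + 1)}` gives `‖g_k(α, ε)‖ ≤ e^{-k}` there, so Cauchy's estimate bounds the
`j`-th Taylor term at `α / n` (of norm `≤ ρ = (ρ / k) · k`) by `e^{-k} k^j`. The series is then
dominated by the summable sequence `N k^N e^{-k}`, uniformly in `n` and `α`.
-/

open Complex Finset

lemma norm_taylorSum_le_of_forall_mem_sphere_norm_le {f : ℂ → ℂ} (hf : Differentiable ℂ f)
    {R S t : ℝ} (hR : 0 < R) (ht : 1 ≤ t) (hS : ∀ z ∈ Metric.sphere (0 : ℂ) R, ‖f z‖ ≤ S)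
    (N : ℕ) {w : ℂ} (hw : ‖w‖ ≤ R * t) :
    ‖∑ j ∈ range N, (1 / (j.factorial : ℂ)) * iteratedDeriv j f 0 * w ^ j‖ ≤ N * (S * t ^ N) := by
  have hS0 : 0 ≤ S := (norm_nonneg _).trans (hS R (by simp [hR.le]))
  have hterm : ∀ j ∈ range N,
      ‖(1 / (j.factorial : ℂ)) * iteratedDeriv j f 0 * w ^ j‖ ≤ S * t ^ N := by
    intro j hj
    have hfac : (0 : ℝ) < j.factorial := by positivity
    have hcauchy := norm_iteratedDeriv_le_of_forall_mem_sphere_norm_le j hR hf.diffContOnCl hS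
    calc ‖(1 / (j.factorial : ℂ)) * iteratedDeriv j f 0 * w ^ j‖
        = ‖iteratedDeriv j f 0‖ / j.factorial * ‖w‖ ^ j := by
          rw [norm_mul, norm_mul, norm_pow, norm_div, norm_one, norm_natCast]; ring
      _ ≤ (j.factorial * S / R ^ j) / j.factorial * (R * t) ^ j := by gcongr
      _ = S * t ^ j := by field_simp; ring
      _ ≤ S * t ^ N := by gcongr; exact (mem_range.1 hj).le
  calc _ ≤ ∑ j ∈ range N, ‖(1 / (j.factorial : ℂ)) * iteratedDeriv j f 0 * w ^ j‖ :=
        norm_sum_le _ _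
    _ ≤ ∑ _j ∈ range N, S * t ^ N := sum_le_sum hterm
    _ = N * (S * t ^ N) := by rw [sum_const, card_range, nsmul_eq_mul]

lemma norm_exp_half_sub_exp_neg_half_le {w : ℂ} (hw : ‖w‖ ≤ 2) :
    ‖exp (w / 2) - exp (-(w / 2))‖ ≤ 2 * ‖w‖ := by
  have hw2 : ‖w / 2‖ ≤ 1 := by rw [norm_div, Complex.norm_two]; linarith
  calc ‖exp (w / 2) - exp (-(w / 2))‖ = ‖(exp (w / 2) - 1) - (exp (-(w / 2)) - 1)‖ := by
        ring_nf
    _ ≤ 2 * ‖w / 2‖ + 2 * ‖-(w / 2)‖ :=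
        (norm_sub_le _ _).trans (add_le_add (norm_exp_sub_one_le hw2)
          (norm_exp_sub_one_le (by rwa [norm_neg])))
    _ = 2 * ‖w‖ := by rw [norm_neg, norm_div, Complex.norm_two]; ring

lemma laurentEval_exp (c : ℤ →₀ ℤ) (ε : ℂ) :
    laurentEval c (exp ε) = ∑ j ∈ c.support, (c j : ℂ) * exp (j * ε) := by
  simp only [laurentEval, exp_int_mul]

lemma norm_laurentEval_exp_le (c : ℤ →₀ ℤ) {ε : ℂ} {T : ℝ}
    (hT : ∀ j ∈ c.support, |(j : ℝ)| * ‖ε‖ ≤ T) :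
    ‖laurentEval c (exp ε)‖ ≤ laurentL1 c * Real.exp T := by
  rw [laurentEval_exp, laurentL1, sum_mul]
  refine (norm_sum_le _ _).trans (sum_le_sum fun j hj => ?_)
  rw [norm_mul, norm_exp, norm_intCast]
  gcongr
  calc (j * ε).re ≤ ‖(j : ℂ) * ε‖ := re_le_norm _
    _ = |(j : ℝ)| * ‖ε‖ := by rw [norm_mul, norm_intCast]
    _ ≤ T := hT j hj

lemma differentiable_gAux (C : ℕ → (ℤ →₀ ℤ)) (k : ℕ) (α : ℂ) :
    Differentiable ℂ (gAux C k α) := by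
  have : gAux C k α = fun ε =>
      (∏ j ∈ Icc 1 k, ((exp (α / 2) - exp (-α / 2)) ^ 2
          - (exp (j * ε / 2) - exp (-(j * ε / 2))) ^ 2)) *
        ∑ j ∈ (C k).support, (C k j : ℂ) * exp (j * ε) := by
    ext ε; rw [gAux, laurentEval_exp]
  rw [this]
  fun_prop

lemma norm_gAux_le (C : ℕ → (ℤ →₀ ℤ)) (k : ℕ) {α z : ℂ} {r T : ℝ} (hr : r ≤ 2)
    (hα : ‖α‖ ≤ r) (hz : k * ‖z‖ ≤ r) (hT : ∀ j ∈ (C k).support, |(j : ℝ)| * ‖z‖ ≤ T) :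
    ‖gAux C k α z‖ ≤ (8 * r ^ 2) ^ k * (laurentL1 (C k) * Real.exp T) := by
  have hsinh : ∀ w : ℂ, ‖w‖ ≤ r → ‖(exp (w / 2) - exp (-(w / 2))) ^ 2‖ ≤ (2 * r) ^ 2 :=
    fun w hw => by
      rw [norm_pow]
      gcongr
      exact (norm_exp_half_sub_exp_neg_half_le (hw.trans hr)).trans (by linarith)
  have hfactor : ∀ j ∈ Icc 1 k, ‖(exp (α / 2) - exp (-α / 2)) ^ 2
      - (exp (j * z / 2) - exp (-(j * z / 2))) ^ 2‖ ≤ 8 * r ^ 2 := by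
    intro j hj
    have hjz : ‖(j : ℂ) * z‖ ≤ r := by
      rw [norm_mul, norm_natCast]
      exact le_trans (by gcongr; exact_mod_cast (mem_Icc.1 hj).2) hz
    rw [neg_div]
    calc _ ≤ _ := norm_sub_le _ _
      _ ≤ (2 * r) ^ 2 + (2 * r) ^ 2 := add_le_add (hsinh α hα) (hsinh _ hjz)
      _ = 8 * r ^ 2 := by ring
  rw [gAux, norm_mul, norm_prod]
  gcongr
  · calc ∏ j ∈ Icc 1 k, _ ≤ ∏ _j ∈ Icc 1 k, 8 * r ^ 2 :=
          prod_le_prod (fun _ _ => norm_nonneg _) hfactor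
      _ = (8 * r ^ 2) ^ k := by rw [prod_const, Nat.card_Icc, Nat.add_sub_cancel]
  · exact norm_laurentEval_exp_le _ hT

lemma norm_gAux_le_exp_neg (C : ℕ → (ℤ →₀ ℤ)) {A B D ρ : ℝ} (hB : 0 ≤ B) (hD : 0 ≤ D)
    (hρ : 8 * ρ ^ 2 ≤ Real.exp (-(A + B + D + 1))) (hρ1 : ρ ≤ 1) {k : ℕ} (hk : 1 ≤ k)
    (hnorm : laurentL1 (C k) ≤ Real.exp (A * k + B * Real.log k))
    (hsupp : ∀ j ∈ (C k).support, |(j : ℝ)| ≤ D * (k : ℝ) ^ 2)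
    {α z : ℂ} (hα : ‖α‖ ≤ ρ) (hz : ‖z‖ = ρ / k) :
    ‖gAux C k α z‖ ≤ Real.exp (-k) := by
  have hk0 : (0 : ℝ) < k := by exact_mod_cast hk
  have hρ0 : 0 ≤ ρ := (norm_nonneg _).trans hα
  have hkz : k * ‖z‖ = ρ := by rw [hz]; field_simp
  have hT : ∀ j ∈ (C k).support, |(j : ℝ)| * ‖z‖ ≤ D * k := fun j hj =>
    calc |(j : ℝ)| * ‖z‖ ≤ D * k ^ 2 * ‖z‖ := by gcongr; exact hsupp j hj
      _ = D * k * ρ := by rw [← hkz]; ring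
      _ ≤ D * k := mul_le_of_le_one_right (by positivity) hρ1
  have hL1 : 0 ≤ laurentL1 (C k) := sum_nonneg fun _ _ => abs_nonneg _
  have hlog : Real.log k ≤ k := (Real.log_le_sub_one_of_pos hk0).trans (by linarith)
  calc ‖gAux C k α z‖ ≤ (8 * ρ ^ 2) ^ k * (laurentL1 (C k) * Real.exp (D * k)) :=
        norm_gAux_le C k (by linarith) hα hkz.le hT
    _ ≤ Real.exp (-(A + B + D + 1)) ^ k *
          (Real.exp (A * k + B * Real.log k) * Real.exp (D * k)) := by gcongr
    _ = Real.exp (-k - B * (k - Real.log k)) := by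
        rw [← Real.exp_nat_mul, ← Real.exp_add, ← Real.exp_add]; ring_nf
    _ ≤ Real.exp (-k) := by gcongr; nlinarith

lemma norm_taylorSum_gAux_le (C : ℕ → (ℤ →₀ ℤ)) {A B D ρ : ℝ} (hB : 0 ≤ B) (hD : 0 ≤ D)
    (hρ : 8 * ρ ^ 2 ≤ Real.exp (-(A + B + D + 1))) (hρ0 : 0 < ρ) (hρ1 : ρ ≤ 1) {k : ℕ}
    (hk : 1 ≤ k) (hnorm : laurentL1 (C k) ≤ Real.exp (A * k + B * Real.log k))
    (hsupp : ∀ j ∈ (C k).support, |(j : ℝ)| ≤ D * (k : ℝ) ^ 2)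
    {α w : ℂ} (hα : ‖α‖ ≤ ρ) (hw : ‖w‖ ≤ ρ) (N : ℕ) :
    ‖∑ j ∈ range N, (1 / (j.factorial : ℂ)) * iteratedDeriv j (gAux C k α) 0 * w ^ j‖
      ≤ N * (Real.exp (-k) * k ^ N) := by
  have hk0 : (0 : ℝ) < k := by exact_mod_cast hk
  refine norm_taylorSum_le_of_forall_mem_sphere_norm_le (differentiable_gAux C k α)
    (div_pos hρ0 hk0) (by exact_mod_cast hk) (fun z hz => ?_) N (by field_simp; exact hw)
  exact norm_gAux_le_exp_neg C hB hD hρ hρ1 hk hnorm hsupp hα (mem_sphere_zero_iff_norm.1 hz)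

lemma norm_tsum_nat_add_le {E : Type*} [NormedAddCommGroup E] [CompleteSpace E] {F : ℕ → E}
    {b : ℕ → ℝ} (hb : Summable b) (hb0 : ∀ k, 0 ≤ b k) (m : ℕ)
    (hF : ∀ k, m ≤ k → ‖F k‖ ≤ b k) :
    ‖∑' k, F (m + k)‖ ≤ ∑' k, b k := by
  have hbm : Summable fun k => b (m + k) := hb.comp_injective (add_right_injective m)
  have hFm : Summable fun k => ‖F (m + k)‖ :=
    hbm.of_nonneg_of_le (fun _ => norm_nonneg _) fun k => hF _ (Nat.le_add_right m k)
  calc ‖∑' k, F (m + k)‖ ≤ ∑' k, ‖F (m + k)‖ := norm_tsum_le_tsum_norm hFm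
    _ ≤ ∑' k, b (m + k) := hFm.tsum_le_tsum (fun k => hF _ (Nat.le_add_right m k)) hbm
    _ ≤ ∑' k, b k := tsum_comp_le_tsum_of_inj hb hb0 (add_right_injective m)

theorem taylor_tail_bound_general (C : ℕ → (ℤ →₀ ℤ)) (A B D : ℝ)
    (hB : 0 < B) (hD : 0 < D)
    (hnorm : ∀ k : ℕ, 1 ≤ k → laurentL1 (C k) ≤ Real.exp (A * k + B * Real.log k))
    (hsupp : ∀ k : ℕ, 1 ≤ k → ∀ j ∈ (C k).support, |(j : ℝ)| ≤ D * (k : ℝ) ^ 2) :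
    ∃ U : Set ℂ, IsOpen U ∧ 0 ∈ U ∧
      ∀ N : ℕ, 1 ≤ N → ∃ M : ℝ, 0 < M ∧
        ∀ n : ℕ, 1 ≤ n → ∀ α ∈ U,
          (Summable (fun k : ℕ =>
            ‖∑ j ∈ Finset.range N,
              (1 / (j.factorial : ℂ)) * iteratedDeriv j (gAux C k α) 0 * (α / n) ^ j‖)) ∧
          ‖∑' k : ℕ,
            ∑ j ∈ Finset.range N,
              (1 / (j.factorial : ℂ)) * iteratedDeriv j (gAux C (n + 1 + k) α) 0 *
                (α / n) ^ j‖ ≤ M := by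
  set ζ := Real.exp (-(A + B + D + 1))
  have hζ : 0 < ζ := Real.exp_pos _
  obtain ⟨ρ, hρ0, hρ1, hρ⟩ : ∃ ρ : ℝ, 0 < ρ ∧ ρ ≤ 1 ∧ 8 * ρ ^ 2 ≤ ζ :=
    ⟨min 1 ζ / 3, by positivity, by linarith [min_le_left 1 ζ],
      by nlinarith [min_le_left 1 ζ, min_le_right 1 ζ, le_min zero_le_one hζ.le]⟩
  refine ⟨Metric.ball 0 ρ, Metric.isOpen_ball, Metric.mem_ball_self hρ0, fun N _ => ?_⟩
  set b : ℕ → ℝ := fun k => N * (Real.exp (-k) * k ^ N)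
  have hb0 : ∀ k, 0 ≤ b k := fun k => by positivity
  have hb : Summable b := by
    simpa [b, mul_comm] using (Real.summable_pow_mul_exp_neg_nat_mul N one_pos).mul_left (N : ℝ)
  refine ⟨∑' k, b k + 1, add_pos_of_nonneg_of_pos (tsum_nonneg hb0) one_pos, fun n hn α hα => ?_⟩
  have hα' : ‖α‖ ≤ ρ := (mem_ball_zero_iff.1 hα).le
  have hαn : ‖α / n‖ ≤ ρ := by
    rw [norm_div, Complex.norm_natCast]
    exact (div_le_self (norm_nonneg _) (by exact_mod_cast hn)).trans hα'
  have key : ∀ k, 1 ≤ k → ‖∑ j ∈ range N,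
      (1 / (j.factorial : ℂ)) * iteratedDeriv j (gAux C k α) 0 * (α / n) ^ j‖ ≤ b k :=
    fun k hk => norm_taylorSum_gAux_le C hB.le hD.le hρ hρ0 hρ1 hk (hnorm k hk) (hsupp k hk)
      hα' hαn N
  refine ⟨hb.of_norm_bounded_eventually_nat (Filter.eventually_atTop.2 ⟨1, fun k hk => ?_⟩), ?_⟩
  · rw [norm_norm]; exact key k hk
  · exact (norm_tsum_nat_add_le hb hb0 (n + 1) fun k hk => key k (by omega)).trans (by linarith)

/-- Under the growth hypotheses on `(C_k)`, there is an open neighborhood `U`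
of `0` such that for every `N ≥ 1` there is `M'_N > 0` with: for all `n ≥ 1` and `α ∈ U`,
the series `∑_{k=0}^{∞} ∑_{j=0}^{N−1} (1/j!) ∂^j_ε g_k(α,0) (α/n)^j` converges absolutely and
its tail beyond `k = n` is bounded in absolute value by `M'_N`. -/
theorem taylor_tail_bound (C : ℕ → (ℤ →₀ ℤ)) (A B D : ℝ)
    (hA : 0 < A) (hB : 0 < B) (hD : 0 < D)
    (hnorm : ∀ k : ℕ, 1 ≤ k → laurentL1 (C k) ≤ Real.exp (A * k + B * Real.log k))
    (hsupp : ∀ k : ℕ, 1 ≤ k → ∀ j ∈ (C k).support, |(j : ℝ)| ≤ D * (k : ℝ) ^ 2) :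
    ∃ U : Set ℂ, IsOpen U ∧ 0 ∈ U ∧
      ∀ N : ℕ, 1 ≤ N → ∃ M : ℝ, 0 < M ∧
        ∀ n : ℕ, 1 ≤ n → ∀ α ∈ U,
          (Summable (fun k : ℕ =>
            ‖∑ j ∈ Finset.range N,
              (1 / (j.factorial : ℂ)) * iteratedDeriv j (gAux C k α) 0 * (α / n) ^ j‖)) ∧
          ‖∑' k : ℕ,
            ∑ j ∈ Finset.range N,
              (1 / (j.factorial : ℂ)) * iteratedDeriv j (gAux C (n + 1 + k) α) 0 *
                (α / n) ^ j‖ ≤ M :=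
  taylor_tail_bound_general C A B D hB hD hnorm hsupp
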